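/- arXiv:2202.06453 — 3 statements merged into one kernel-verified Lean document; each statement's English description precedes it below -/
import Mathlib

section
/- If ρ = ReLU((τ/2)·λ_max(Ω^{1/2} A_θ W Ω^{-1/2} + Ω^{-1/2} Wᵀ A_θᵀ Ω^{1/2}) − 1 + δ) for some δ > 0, and A = A_θ/(ρ+1), then Ω(AW − (1/τ)I) + (Wᵀ Aᵀ − (1/τ)I)Ω ⪯ −(2δ/(τ(ρ+1)))Ω ≺ 0; in particular the matrix AW − (1/τ)I is Lyapunov diagonally stable. -/
open Matrix

open Classical in
noncomputable def lambdaMax {m : Type*} [Fintype m] [DecidableEq m]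
    (M : Matrix m m ℝ) : ℝ :=
  if h : M.IsHermitian then ⨆ i, h.eigenvalues i else 0

/-- A real matrix `M` is Lyapunov diagonally stable if there exists a positive diagonal `Ω`
with `ΩM + MᵀΩ ≺ 0`. -/
def LyapunovDiagStable {l : ℕ} (M : Matrix (Fin l) (Fin l) ℝ) : Prop :=
  ∃ ω : Fin l → ℝ, (∀ i, 0 < ω i) ∧
    (-(Matrix.diagonal ω * M + Mᵀ * Matrix.diagonal ω)).PosDef

/-!
Write `P = A_θ W` and `D = Ω^{1/2}`. Conjugating by `D` turns the symmetric matrix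
`M = D P D⁻¹ + D⁻¹ Pᵀ D` into `D M D = Ω P + Pᵀ Ω`, and `M ⪯ λ_max(M) I`. The ReLU defining
`ρ` is chosen so that `λ_max(M) ≤ c := 2(ρ + 1 - δ)/τ`, and then
`-(2δ/(τ(ρ+1))) Ω - L = (ρ+1)⁻¹ D (c I - M) D ⪰ 0`.
-/

theorem mul_mul_add_mul_mul_mul_eq {R : Type*} [Ring R] {d e : R} (hde : d * e = 1)
    (hed : e * d = 1) (p q : R) :
    d * (d * p * e + e * q * d) * d = d * d * p + q * (d * d) := by
  calc d * (d * p * e + e * q * d) * d = d * d * p * (e * d) + (d * e) * q * (d * d) := by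
        noncomm_ring
    _ = d * d * p + q * (d * d) := by rw [hde, hed, mul_one, one_mul]

namespace Matrix

variable {m : Type*} [Fintype m] [DecidableEq m]

lemma IsHermitian.eigenvalues_le_lambdaMax {M : Matrix m m ℝ} (hM : M.IsHermitian) (i : m) :
    hM.eigenvalues i ≤ lambdaMax M := by
  rw [lambdaMax, dif_pos hM]
  exact le_ciSup (Set.finite_range _).bddAbove i

open scoped MatrixOrder in
lemma IsHermitian.posSemidef_smul_one_sub_of_lambdaMax_le {M : Matrix m m ℝ}
    (hM : M.IsHermitian) {c : ℝ} (hc : lambdaMax M ≤ c) : (c • 1 - M).PosSemidef := by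
  have hle : M ≤ algebraMap ℝ (Matrix m m ℝ) c := by
    refine le_algebraMap_of_spectrum_le (fun x hx => ?_) hM.isSelfAdjoint
    obtain ⟨i, rfl⟩ := hM.spectrum_real_eq_range_eigenvalues ▸ hx
    exact (hM.eigenvalues_le_lambdaMax i).trans hc
  rwa [le_iff, Algebra.algebraMap_eq_smul_one] at hle

lemma isHermitian_diagonal_mul_mul_diagonal_add (d e : m → ℝ) (P : Matrix m m ℝ) :
    (diagonal d * P * diagonal e + diagonal e * Pᵀ * diagonal d).IsHermitian := by
  convert isHermitian_add_transpose_self (diagonal d * P * diagonal e) using 2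
  simp [Matrix.mul_assoc]

lemma diagonal_sqrt_mul_diagonal_sqrt {ω : m → ℝ} (hω : ∀ i, 0 ≤ ω i) :
    (diagonal fun i => Real.sqrt (ω i)) * (diagonal fun i => Real.sqrt (ω i)) = diagonal ω := by
  simp [diagonal_mul_diagonal, Real.mul_self_sqrt (hω _)]

lemma diagonal_sqrt_mul_symmetrize_mul_diagonal_sqrt {ω : m → ℝ} (hω : ∀ i, 0 < ω i)
    (P : Matrix m m ℝ) :
    let D : Matrix m m ℝ := diagonal fun i => Real.sqrt (ω i)
    let Dinv : Matrix m m ℝ := diagonal fun i => (Real.sqrt (ω i))⁻¹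
    D * (D * P * Dinv + Dinv * Pᵀ * D) * D = diagonal ω * P + Pᵀ * diagonal ω := by
  intro D Dinv
  have hsqrt : ∀ i, Real.sqrt (ω i) ≠ 0 := fun i => (Real.sqrt_pos.mpr (hω i)).ne'
  have hD_Dinv : D * Dinv = 1 := by simp [D, Dinv, diagonal_mul_diagonal, hsqrt]
  have hDinv_D : Dinv * D = 1 := by simp [D, Dinv, diagonal_mul_diagonal, hsqrt]
  rw [mul_mul_add_mul_mul_mul_eq hD_Dinv hDinv_D,
    diagonal_sqrt_mul_diagonal_sqrt fun i => (hω i).le]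

lemma neg_smul_sub_mul_add_transpose_mul_eq {Ω K P : Matrix m m ℝ} {r t s c : ℝ}
    (hK : K = r • P - t • 1) (hs : 2 * t - s = r * c) :
    -s • Ω - (Ω * K + Kᵀ * Ω) = r • (c • Ω - (Ω * P + Pᵀ * Ω)) := by
  subst hK
  simp only [transpose_sub, transpose_smul, transpose_one, Matrix.mul_sub, Matrix.sub_mul,
    Matrix.mul_smul, Matrix.smul_mul, Matrix.mul_one, Matrix.one_mul]
  linear_combination (norm := module) hs • Ω

end Matrix

lemma lyapunovDiagStable_of_posSemidef_neg_sub {l : ℕ} {K Q : Matrix (Fin l) (Fin l) ℝ}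
    {ω : Fin l → ℝ} (hω : ∀ i, 0 < ω i) (hQ : Q.PosDef)
    (hK : (-Q - (diagonal ω * K + Kᵀ * diagonal ω)).PosSemidef) : LyapunovDiagStable K :=
  ⟨ω, hω, by convert hQ.add_posSemidef hK using 1; abel⟩

theorem iss_parametrization_lds_general {n l : ℕ} (τ δ : ℝ) (hτ : 0 < τ) (hδ : 0 < δ)
    (Aθ : Matrix (Fin l) (Fin n) ℝ) (W : Matrix (Fin n) (Fin l) ℝ)
    (ω : Fin l → ℝ) (hω : ∀ i, 0 < ω i) :
    let Ωm : Matrix (Fin l) (Fin l) ℝ := Matrix.diagonal ω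
    let Ωh : Matrix (Fin l) (Fin l) ℝ := Matrix.diagonal fun i => Real.sqrt (ω i)
    let Ωhinv : Matrix (Fin l) (Fin l) ℝ := Matrix.diagonal fun i => (Real.sqrt (ω i))⁻¹
    let M : Matrix (Fin l) (Fin l) ℝ := Ωh * (Aθ * W) * Ωhinv + Ωhinv * (Wᵀ * Aθᵀ) * Ωh
    let ρ : ℝ := max 0 ((τ / 2) * lambdaMax M - 1 + δ)
    let A : Matrix (Fin l) (Fin n) ℝ := (ρ + 1)⁻¹ • Aθ
    let L : Matrix (Fin l) (Fin l) ℝ :=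
      Ωm * (A * W - τ⁻¹ • 1) + (Wᵀ * Aᵀ - τ⁻¹ • 1) * Ωm
    ((-(2 * δ / (τ * (ρ + 1)))) • Ωm - L).PosSemidef ∧
      ((2 * δ / (τ * (ρ + 1))) • Ωm).PosDef ∧
      LyapunovDiagStable (A * W - τ⁻¹ • 1) := by
  intro Ωm Ωh Ωhinv M ρ A L
  set K := A * W - τ⁻¹ • 1
  have hL : L = Ωm * K + Kᵀ * Ωm := by simp [L, K, transpose_sub, transpose_mul]
  have hM : M.IsHermitian := by
    simpa [M, transpose_mul] using isHermitian_diagonal_mul_mul_diagonal_add _ _ (Aθ * W)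
  have hρ : 0 < ρ + 1 := by linarith [le_max_left 0 ((τ / 2) * lambdaMax M - 1 + δ)]
  set c : ℝ := 2 * (ρ + 1 - δ) / τ
  have hc : lambdaMax M ≤ c := by
    rw [le_div_iff₀ hτ]
    nlinarith [le_max_right 0 ((τ / 2) * lambdaMax M - 1 + δ)]
  have hmargin :
      -(2 * δ / (τ * (ρ + 1))) • Ωm - L = (ρ + 1)⁻¹ • (Ωh * (c • 1 - M) * Ωh) := by
    have hconj : Ωh * M * Ωh = Ωm * (Aθ * W) + (Aθ * W)ᵀ * Ωm := by
      simpa [M, transpose_mul] using diagonal_sqrt_mul_symmetrize_mul_diagonal_sqrt hω (Aθ * W)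
    have hexpand : Ωh * (c • 1 - M) * Ωh = c • Ωm - (Ωm * (Aθ * W) + (Aθ * W)ᵀ * Ωm) := by
      rw [Matrix.mul_sub, Matrix.sub_mul, hconj, Matrix.mul_smul, Matrix.mul_one,
        Matrix.smul_mul, diagonal_sqrt_mul_diagonal_sqrt fun i => (hω i).le]
    rw [hL, hexpand]
    refine neg_smul_sub_mul_add_transpose_mul_eq (t := τ⁻¹) (by simp [K, A]) ?_
    simp only [c]
    field_simp
  have hpsd : (-(2 * δ / (τ * (ρ + 1))) • Ωm - L).PosSemidef := by
    rw [hmargin]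
    simpa [Ωh, diagonal_conjTranspose] using
      ((hM.posSemidef_smul_one_sub_of_lambdaMax_le hc).mul_mul_conjTranspose_same Ωh).smul
        (inv_nonneg.mpr hρ.le)
  have hpd : ((2 * δ / (τ * (ρ + 1))) • Ωm).PosDef :=
    (posDef_diagonal_iff.mpr hω).smul (by positivity)
  refine ⟨hpsd, hpd, lyapunovDiagStable_of_posSemidef_neg_sub hω hpd ?_⟩
  rwa [neg_smul, hL] at hpsd

/-- with ρ given by the ReLU formula and A = A_θ/(ρ+1),
Ω(AW − (1/τ)I) + (WᵀAᵀ − (1/τ)I)Ω ⪯ −(2δ/(τ(ρ+1)))Ω ≺ 0; in particular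
AW − (1/τ)I is Lyapunov diagonally stable. -/
theorem iss_parametrization_lds {n l : ℕ} (hln : n ≤ l) (τ δ : ℝ) (hτ : 0 < τ) (hδ : 0 < δ)
    (Aθ : Matrix (Fin l) (Fin n) ℝ) (W : Matrix (Fin n) (Fin l) ℝ)
    (ω : Fin l → ℝ) (hω : ∀ i, 0 < ω i) :
    let Ωm : Matrix (Fin l) (Fin l) ℝ := Matrix.diagonal ω
    let Ωh : Matrix (Fin l) (Fin l) ℝ := Matrix.diagonal fun i => Real.sqrt (ω i)
    let Ωhinv : Matrix (Fin l) (Fin l) ℝ := Matrix.diagonal fun i => (Real.sqrt (ω i))⁻¹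
    let M : Matrix (Fin l) (Fin l) ℝ := Ωh * (Aθ * W) * Ωhinv + Ωhinv * (Wᵀ * Aθᵀ) * Ωh
    let ρ : ℝ := max 0 ((τ / 2) * lambdaMax M - 1 + δ)
    let A : Matrix (Fin l) (Fin n) ℝ := (ρ + 1)⁻¹ • Aθ
    let L : Matrix (Fin l) (Fin l) ℝ :=
      Ωm * (A * W - τ⁻¹ • 1) + (Wᵀ * Aᵀ - τ⁻¹ • 1) * Ωm
    ((-(2 * δ / (τ * (ρ + 1)))) • Ωm - L).PosSemidef ∧
      ((2 * δ / (τ * (ρ + 1))) • Ωm).PosDef ∧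
      LyapunovDiagStable (A * W - τ⁻¹ • 1) :=
  iss_parametrization_lds_general τ δ hτ hδ Aθ W ω hω
end

section
/- Let f(x) = −x/τ + W σ_ℓ(Ax + c) + ν where AW − (1/τ)I is Lyapunov diagonally stable with certificate Ω (i.e., Ω(AW − (1/τ)I) + (WᵀAᵀ − (1/τ)I)Ω ≺ 0) and σ_ℓ is elementwise slope-restricted in [0,1]. Then the map g(z) = −z/τ + AW σ_ℓ(z) is one-to-one on ℝ^ℓ, i.e., g(z₁) = g(z₂) implies z₁ = z₂. -/
/-!
Put u = z₁ - z₂ and v = σ_ℓ(z₁) - σ_ℓ(z₂). If g(z₁) = g(z₂), then AW v = u/τ, i.e.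
(AW - I/τ) v = (u - v)/τ. Slope restriction to [0,1] gives vᵢ(uᵢ - vᵢ) ≥ 0 for every i, so the
Ω-weighted pairing of v with (AW - I/τ) v is nonnegative, while Lyapunov diagonal stability makes
it negative unless v = 0. Hence v = 0 and then u = τ AW v = 0.
-/

open Matrix

theorem slope_mul_sub_nonneg {σ : ℝ → ℝ}
    (hs : ∀ r r' : ℝ, r ≠ r' →
      0 ≤ (σ r - σ r') / (r - r') ∧ (σ r - σ r') / (r - r') ≤ 1)
    (r r' : ℝ) : 0 ≤ (σ r - σ r') * ((r - r') - (σ r - σ r')) := by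
  rcases eq_or_ne r r' with rfl | hne
  · simp
  obtain ⟨hlo, hhi⟩ := hs r r' hne
  have hσ : σ r - σ r' = (σ r - σ r') / (r - r') * (r - r') :=
    (div_mul_cancel₀ _ (sub_ne_zero.mpr hne)).symm
  rw [hσ]
  nlinarith [sq_nonneg (r - r'), mul_nonneg hlo (sub_nonneg.mpr hhi)]

section

variable {ι : Type*} [Fintype ι] [DecidableEq ι] (ω : ι → ℝ) (B : Matrix ι ι ℝ)

theorem dotProduct_diagonal_mul_add_transpose_mulVec (v : ι → ℝ) :
    v ⬝ᵥ ((diagonal ω * B + Bᵀ * diagonal ω) *ᵥ v) = 2 * ∑ i, ω i * v i * (B *ᵥ v) i := by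
  rw [add_mulVec, ← mulVec_mulVec, ← mulVec_mulVec, dotProduct_add,
    dotProduct_mulVec v Bᵀ, vecMul_transpose]
  simp only [dotProduct, mulVec_diagonal, Finset.mul_sum, ← Finset.sum_add_distrib]
  exact Finset.sum_congr rfl fun i _ => by ring

theorem eq_zero_of_posDef_lyapunov_of_sum_nonneg
    (hB : (-(diagonal ω * B + Bᵀ * diagonal ω)).PosDef) {v : ι → ℝ}
    (hv : 0 ≤ ∑ i, ω i * v i * (B *ᵥ v) i) : v = 0 := by
  by_contra hne
  have hpos := hB.dotProduct_mulVec_pos hne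
  rw [star_trivial, neg_mulVec, dotProduct_neg,
    dotProduct_diagonal_mul_add_transpose_mulVec] at hpos
  linarith

end

/-- under the Lyapunov diagonal stability certificate for AW − (1/τ)I and a
[0,1] slope-restricted σ, the map g(z) = −z/τ + AW σ_ℓ(z) is injective. -/
theorem lds_implies_injective {l n : ℕ} (τ : ℝ) (hτ : 0 < τ)
    (A : Matrix (Fin l) (Fin n) ℝ) (W : Matrix (Fin n) (Fin l) ℝ)
    (ω : Fin l → ℝ) (hω : ∀ i, 0 < ω i)
    (σ : ℝ → ℝ)
    (hs : ∀ r r' : ℝ, r ≠ r' →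
      0 ≤ (σ r - σ r') / (r - r') ∧ (σ r - σ r') / (r - r') ≤ 1)
    (hLDS : (-(Matrix.diagonal ω * (A * W - τ⁻¹ • 1) +
        (A * W - τ⁻¹ • (1 : Matrix (Fin l) (Fin l) ℝ))ᵀ * Matrix.diagonal ω)).PosDef) :
    Function.Injective
      (fun z : Fin l → ℝ => -(τ⁻¹) • z + (A * W).mulVec fun i => σ (z i)) := by
  intro z₁ z₂ h
  set v : Fin l → ℝ := fun i => σ (z₁ i) - σ (z₂ i)
  have hAWv : (A * W) *ᵥ v = τ⁻¹ • (z₁ - z₂) := by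
    have hv_def : v = (fun i => σ (z₁ i)) - fun i => σ (z₂ i) := rfl
    rw [hv_def, mulVec_sub]
    simp only at h
    linear_combination (norm := module) h
  have hBv : (A * W - τ⁻¹ • 1) *ᵥ v = τ⁻¹ • (z₁ - z₂ - v) := by
    rw [sub_mulVec, hAWv, smul_mulVec, one_mulVec, ← smul_sub]
  have hv : v = 0 := by
    refine eq_zero_of_posDef_lyapunov_of_sum_nonneg ω _ hLDS (Finset.sum_nonneg fun i _ => ?_)
    have hweight : 0 ≤ ω i * τ⁻¹ := mul_nonneg (hω i).le (inv_nonneg.mpr hτ.le)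
    convert mul_nonneg hweight (slope_mul_sub_nonneg hs (z₁ i) (z₂ i)) using 1
    simp only [hBv, v, Pi.smul_apply, Pi.sub_apply, smul_eq_mul]
    ring
  have hz : τ⁻¹ • (z₁ - z₂) = 0 := by rw [← hAWv, hv, mulVec_zero]
  exact sub_eq_zero.mp ((smul_eq_zero.mp hz).resolve_left (inv_ne_zero hτ.ne'))
end

section
/- Suppose ẋ = f(x, u) admits a smooth function V with c₁‖x‖² ≤ V(x) ≤ c₂‖x‖² and ∇V(x)ᵀ f(x,u) ≤ −λ‖x‖² whenever ‖x‖ ≥ g(‖u‖), where c₁, c₂, λ > 0 and g is a class-K function. Then for every bounded measurable input u and every solution x(t), we have the ISS estimate ‖x(t)‖ ≤ √(c₂/c₁) e^{−(λ/(2c₂))t}‖x(0)‖ + √(c₂/c₁) g(sup_s ‖u(s)‖) for all t ≥ 0. -/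
/-!
Along a solution, `W t = V (x t)` satisfies `W' ≤ -(λ/c₂) W` as long as `W > c₂ g(‖u‖_∞)²`,
because then `‖x‖ > g(‖u‖_∞) ≥ g(‖u t‖)` and the dissipation inequality applies. So `W t · e^{λt/c₂}`
decreases while `W` stays above this threshold, which gives
`W t ≤ max (W 0 · e^{-λt/c₂}) (c₂ g(‖u‖_∞)²)`; the quadratic bounds on `V` turn this into the
estimate for `‖x t‖`.
-/

open scoped RealInnerProductSpace

open Set Real

theorem HasGradientAt.comp_hasDerivAt {E : Type*} [NormedAddCommGroup E] [InnerProductSpace ℝ E]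
    [CompleteSpace E] {V : E → ℝ} {v : E} {x : ℝ → E} {x' : E} {t : ℝ}
    (hV : HasGradientAt V v (x t)) (hx : HasDerivAt x x' t) :
    HasDerivAt (fun s => V (x s)) ⟪v, x'⟫ t :=
  (hasGradientAt_iff_hasFDerivAt.mp hV).comp_hasDerivAt t hx

theorem antitoneOn_mul_exp_of_deriv_le_neg_mul {W W' : ℝ → ℝ} {k a d : ℝ}
    (hWc : ContinuousOn W (Icc a d)) (hW : ∀ s ∈ Ioo a d, HasDerivAt W (W' s) s)
    (hdecay : ∀ s ∈ Ioo a d, W' s ≤ -(k * W s)) :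
    AntitoneOn (fun s => W s * exp (k * s)) (Icc a d) := by
  have hexp : ∀ s : ℝ, HasDerivAt (fun r => exp (k * r)) (exp (k * s) * k) s := fun s => by
    simpa using ((hasDerivAt_id s).const_mul k).exp
  refine antitoneOn_of_hasDerivWithinAt_nonpos (convex_Icc a d)
    (hWc.mul (continuous_exp.comp (continuous_const_mul k)).continuousOn) (fun s hs => ?_)
    (f' := fun s => W' s * exp (k * s) + W s * (exp (k * s) * k)) (fun s hs => ?_)
  · rw [interior_Icc] at hs ⊢
    exact ((hW s hs).mul (hexp s)).hasDerivWithinAt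
  · rw [interior_Icc] at hs
    have := hdecay s hs
    have := exp_pos (k * s)
    nlinarith

theorem le_mul_exp_of_mul_exp_le {w₀ w₁ k a d : ℝ}
    (h : w₁ * exp (k * d) ≤ w₀ * exp (k * a)) : w₁ ≤ w₀ * exp (-(k * (d - a))) := by
  rw [← le_div_iff₀ (exp_pos _)] at h
  calc w₁ ≤ w₀ * exp (k * a) / exp (k * d) := h
    _ = w₀ * exp (-(k * (d - a))) := by rw [mul_div_assoc, ← exp_sub]; ring_nf

theorem le_max_mul_exp_of_deriv_le_neg_mul {W W' : ℝ → ℝ} {k θ a d : ℝ} (hk : 0 ≤ k)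
    (hθ : 0 ≤ θ) (had : a ≤ d) (hW : ∀ s ∈ Icc a d, HasDerivAt W (W' s) s)
    (hdecay : ∀ s ∈ Icc a d, θ < W s → W' s ≤ -(k * W s)) :
    W d ≤ max (W a * exp (-(k * (d - a)))) θ := by
  have hWc : ContinuousOn W (Icc a d) := fun s hs => (hW s hs).continuousAt.continuousWithinAt
  have hanti : ∀ c ∈ Icc a d, (∀ s ∈ Ioo c d, θ < W s) →
      W d * exp (k * d) ≤ W c * exp (k * c) := fun c hc hlarge =>
    antitoneOn_mul_exp_of_deriv_le_neg_mul (hWc.mono (Icc_subset_Icc_left hc.1))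
      (fun s hs => hW s (Ioo_subset_Icc_self.trans (Icc_subset_Icc_left hc.1) hs))
      (fun s hs => hdecay s (Ioo_subset_Icc_self.trans (Icc_subset_Icc_left hc.1) hs)
        (hlarge s hs)) ⟨le_rfl, hc.2⟩ ⟨hc.2, le_rfl⟩ hc.2
  set S := Icc a d ∩ W ⁻¹' Iic θ
  have hS : IsCompact S := isCompact_Icc.of_isClosed_subset
    (hWc.preimage_isClosed_of_isClosed isClosed_Icc isClosed_Iic) inter_subset_left
  rcases S.eq_empty_or_nonempty with hS₀ | hS₀
  · refine le_max_of_le_left (le_mul_exp_of_mul_exp_le (hanti a ⟨le_rfl, had⟩ fun s hs => ?_))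
    by_contra! hs'
    exact hS₀.subset ⟨Ioo_subset_Icc_self hs, hs'⟩
  · -- `sSup S` is the last time at which `W ≤ θ`; from there on `W` decays
    have hc := hS.sSup_mem hS₀
    refine le_max_of_le_right (le_of_mul_le_mul_right ?_ (exp_pos (k * d)))
    calc W d * exp (k * d) ≤ W (sSup S) * exp (k * sSup S) := hanti _ hc.1 fun s hs => by
          by_contra! hs'
          exact hs.1.not_ge (le_csSup hS.bddAbove ⟨⟨hc.1.1.trans hs.1.le, hs.2.le⟩, hs'⟩)
      _ ≤ θ * exp (k * sSup S) := mul_le_mul_of_nonneg_right hc.2 (exp_pos _).le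
      _ ≤ θ * exp (k * d) := by gcongr; exact hc.1.2

theorem le_sqrt_div_mul_add_sqrt_div_mul {c₁ c₂ r p q : ℝ} (hc₁ : 0 < c₁) (hp : 0 ≤ p)
    (hq : 0 ≤ q) (h : c₁ * r ^ 2 ≤ c₂ * max (p ^ 2) (q ^ 2)) :
    r ≤ √(c₂ / c₁) * p + √(c₂ / c₁) * q := by
  have hr : r ^ 2 ≤ c₂ / c₁ * max (p ^ 2) (q ^ 2) := by
    rw [div_mul_eq_mul_div, le_div_iff₀ hc₁]; linarith
  have hmax : max (p ^ 2) (q ^ 2) ≤ (p + q) ^ 2 := max_le (by nlinarith) (by nlinarith)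
  calc r ≤ |r| := le_abs_self r
    _ ≤ √(c₂ / c₁ * max (p ^ 2) (q ^ 2)) := abs_le_sqrt hr
    _ = √(c₂ / c₁) * √(max (p ^ 2) (q ^ 2)) := sqrt_mul' _ (le_max_of_le_left (sq_nonneg p))
    _ ≤ √(c₂ / c₁) * (p + q) := by
        gcongr; exact (sqrt_le_sqrt hmax).trans (sqrt_sq (add_nonneg hp hq)).le
    _ = √(c₂ / c₁) * p + √(c₂ / c₁) * q := mul_add _ _ _

theorem iss_lyapunov_quadratic_estimate_general {n m : ℕ}
    (f : EuclideanSpace ℝ (Fin n) → EuclideanSpace ℝ (Fin m) → EuclideanSpace ℝ (Fin n))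
    (V : EuclideanSpace ℝ (Fin n) → ℝ) (hV : ContDiff ℝ 1 V)
    (c₁ c₂ lam : ℝ) (hc₁ : 0 < c₁) (hc₂ : 0 < c₂) (hlam : 0 < lam)
    (g : ℝ → ℝ) (hgmono : StrictMonoOn g (Set.Ici 0))
    (hgnonneg : ∀ r : ℝ, 0 ≤ r → 0 ≤ g r)
    (hlow : ∀ x, c₁ * ‖x‖ ^ 2 ≤ V x) (hupp : ∀ x, V x ≤ c₂ * ‖x‖ ^ 2)
    (hdiss : ∀ x u', g ‖u'‖ ≤ ‖x‖ → ⟪gradient V x, f x u'⟫ ≤ -lam * ‖x‖ ^ 2)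
    (u : ℝ → EuclideanSpace ℝ (Fin m))
    (hubdd : BddAbove (Set.range fun s : ℝ => ‖u s‖))
    (x : ℝ → EuclideanSpace ℝ (Fin n))
    (hx : ∀ t : ℝ, HasDerivAt x (f (x t) (u t)) t) :
    ∀ t : ℝ, 0 ≤ t →
      ‖x t‖ ≤ Real.sqrt (c₂ / c₁) * Real.exp (-(lam / (2 * c₂)) * t) * ‖x 0‖ +
        Real.sqrt (c₂ / c₁) * g (⨆ s : ℝ, ‖u s‖) := by
  intro t ht
  set M := ⨆ s : ℝ, ‖u s‖
  have huM : ∀ s, ‖u s‖ ≤ M := le_ciSup hubdd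
  have hM : 0 ≤ M := (norm_nonneg _).trans (huM 0)
  have hW : ∀ s, HasDerivAt (fun s => V (x s)) ⟪gradient V (x s), f (x s) (u s)⟫ s := fun s =>
    ((hV.differentiable one_ne_zero) (x s)).hasGradientAt.comp_hasDerivAt (hx s)
  have hdecay : ∀ s, c₂ * g M ^ 2 < V (x s) →
      ⟪gradient V (x s), f (x s) (u s)⟫ ≤ -(lam / c₂ * V (x s)) := by
    intro s hs
    have hgx : g M < ‖x s‖ := lt_of_pow_lt_pow_left₀ 2 (norm_nonneg _)
      (lt_of_mul_lt_mul_left (hs.trans_le (hupp (x s))) hc₂.le)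
    have hVx : lam / c₂ * V (x s) ≤ lam * ‖x s‖ ^ 2 := by
      rw [div_mul_eq_mul_div, div_le_iff₀ hc₂]; nlinarith [hupp (x s)]
    calc ⟪gradient V (x s), f (x s) (u s)⟫ ≤ -lam * ‖x s‖ ^ 2 :=
          hdiss _ _ ((hgmono.monotoneOn (norm_nonneg _) hM (huM s)).trans hgx.le)
      _ ≤ -(lam / c₂ * V (x s)) := by linarith
  have hVt := le_max_mul_exp_of_deriv_le_neg_mul (div_pos hlam hc₂).le
    (by positivity : 0 ≤ c₂ * g M ^ 2) ht (fun s _ => hW s) (fun s _ => hdecay s)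
  have hexp : exp (-(lam / c₂ * (t - 0))) = exp (-(lam / (2 * c₂)) * t) ^ 2 := by
    rw [← exp_nat_mul]; congr 1; field_simp; ring
  rw [mul_assoc]
  refine le_sqrt_div_mul_add_sqrt_div_mul hc₁ (by positivity) (hgnonneg M hM) ?_
  calc c₁ * ‖x t‖ ^ 2 ≤ V (x t) := hlow _
    _ ≤ max (V (x 0) * exp (-(lam / c₂ * (t - 0)))) (c₂ * g M ^ 2) := hVt
    _ ≤ max (c₂ * (exp (-(lam / (2 * c₂)) * t) * ‖x 0‖) ^ 2) (c₂ * g M ^ 2) := by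
        refine max_le_max ?_ le_rfl
        rw [hexp, mul_pow, mul_comm (_ ^ 2), ← mul_assoc]
        exact mul_le_mul_of_nonneg_right (hupp _) (sq_nonneg _)
    _ = c₂ * max ((exp (-(lam / (2 * c₂)) * t) * ‖x 0‖) ^ 2) (g M ^ 2) :=
        (mul_max_of_nonneg _ _ hc₂.le).symm

/-- quantitative ISS-Lyapunov theorem under quadratic bounds:
if c₁‖x‖² ≤ V(x) ≤ c₂‖x‖² and ∇V(x)ᵀf(x,u) ≤ −λ‖x‖² whenever ‖x‖ ≥ g(‖u‖) for a
class-K function g, then every solution satisfies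
‖x(t)‖ ≤ √(c₂/c₁)e^{−(λ/(2c₂))t}‖x(0)‖ + √(c₂/c₁)·g(sup_s‖u(s)‖). -/
theorem iss_lyapunov_quadratic_estimate {n m : ℕ}
    (f : EuclideanSpace ℝ (Fin n) → EuclideanSpace ℝ (Fin m) → EuclideanSpace ℝ (Fin n))
    (hflip : LocallyLipschitz
      (fun p : EuclideanSpace ℝ (Fin n) × EuclideanSpace ℝ (Fin m) => f p.1 p.2))
    (V : EuclideanSpace ℝ (Fin n) → ℝ) (hV : ContDiff ℝ 1 V)
    (c₁ c₂ lam : ℝ) (hc₁ : 0 < c₁) (hc₂ : 0 < c₂) (hlam : 0 < lam)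
    (g : ℝ → ℝ) (hg0 : g 0 = 0) (hgmono : StrictMonoOn g (Set.Ici 0))
    (hgcont : ContinuousOn g (Set.Ici 0)) (hgnonneg : ∀ r : ℝ, 0 ≤ r → 0 ≤ g r)
    (hlow : ∀ x, c₁ * ‖x‖ ^ 2 ≤ V x) (hupp : ∀ x, V x ≤ c₂ * ‖x‖ ^ 2)
    (hdiss : ∀ x u', g ‖u'‖ ≤ ‖x‖ → ⟪gradient V x, f x u'⟫ ≤ -lam * ‖x‖ ^ 2)
    (u : ℝ → EuclideanSpace ℝ (Fin m)) (humeas : Measurable u)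
    (hubdd : BddAbove (Set.range fun s : ℝ => ‖u s‖))
    (x : ℝ → EuclideanSpace ℝ (Fin n))
    (hx : ∀ t : ℝ, HasDerivAt x (f (x t) (u t)) t) :
    ∀ t : ℝ, 0 ≤ t →
      ‖x t‖ ≤ Real.sqrt (c₂ / c₁) * Real.exp (-(lam / (2 * c₂)) * t) * ‖x 0‖ +
        Real.sqrt (c₂ / c₁) * g (⨆ s : ℝ, ‖u s‖) :=
  iss_lyapunov_quadratic_estimate_general f V hV c₁ c₂ lam hc₁ hc₂ hlam g hgmono hgnonneg hlow hupp
    hdiss u hubdd x hx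
end
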